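/- arXiv:0807.2734 — 3 statements merged into one kernel-verified Lean document; each statement's English description precedes it below -/
import Mathlib

section
/- For all continuous functions v, w : [0,1] → ℝ, the Hellinger distance between the densities p_v and p_w satisfies h(p_v, p_w) ≤ ‖v − w‖_∞ · e^{‖v − w‖_∞ / 2}, i.e. (∫₀¹ (√(p_v(s)) − √(p_w(s)))² ds)^{1/2} ≤ ‖v − w‖_∞ · e^{‖v − w‖_∞ / 2}. -/
/-!
Write `f = e^v`, `g = e^w`, `A = ∫ f`, `B = ∫ g`. The squared Hellinger distance between `f / A`
and `g / B` is `2 - 2 ∫ √(f g) / √(A B)`. Pointwise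
`e^v + e^w = 2 cosh ((v - w) / 2) e^{(v + w) / 2} ≤ 2 cosh (M / 2) √(f g)`, so integrating and
AM-GM give `√(A B) ≤ (A + B) / 2 ≤ cosh (M / 2) ∫ √(f g)`. Hence
`h² ≤ 2 - 2 / cosh (M / 2) ≤ (M / 2)² e^{M / 2}`, and the latter is at most `M² e^M`.
-/

open MeasureTheory Real

lemma Real.sqrt_mul_le_add_div_two {x y : ℝ} (hx : 0 ≤ x) (hy : 0 ≤ y) :
    √(x * y) ≤ (x + y) / 2 := by
  rw [sqrt_le_left (by positivity)]
  nlinarith [sq_nonneg (x - y)]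

lemma Real.sq_sqrt_div_sub_sqrt_div {x y a b : ℝ} (hx : 0 ≤ x) (hy : 0 ≤ y) (ha : 0 < a)
    (hb : 0 < b) :
    (√(x / a) - √(y / b)) ^ 2 = x / a + y / b - 2 * √(x * y) / √(a * b) := by
  rw [sub_sq, sq_sqrt (by positivity), sq_sqrt (by positivity), sqrt_div hx, sqrt_div hy,
    sqrt_mul hx, sqrt_mul ha.le]
  ring

lemma Real.exp_add_exp_le_two_mul_cosh_mul_sqrt {x y M : ℝ} (h : |x - y| ≤ M) :
    exp x + exp y ≤ 2 * cosh (M / 2) * √(exp x * exp y) := by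
  have hcosh : cosh ((x - y) / 2) ≤ cosh (M / 2) := by
    simp only [cosh_le_cosh, abs_div, abs_two, abs_of_nonneg ((abs_nonneg _).trans h)]
    linarith
  have hx : exp x = exp ((x - y) / 2) * exp ((x + y) / 2) := by rw [← exp_add]; ring_nf
  have hy : exp y = exp (-((x - y) / 2)) * exp ((x + y) / 2) := by rw [← exp_add]; ring_nf
  calc exp x + exp y = 2 * cosh ((x - y) / 2) * exp ((x + y) / 2) := by
        rw [cosh_eq, hx, hy]; ring
    _ ≤ 2 * cosh (M / 2) * exp ((x + y) / 2) := by gcongr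
    _ = 2 * cosh (M / 2) * √(exp x * exp y) := by rw [← exp_add, exp_half]

lemma Real.two_sub_two_div_cosh_le {a : ℝ} (ha : 0 ≤ a) : 2 - 2 / cosh a ≤ a ^ 2 * exp a := by
  have hcosh : 1 ≤ cosh a := one_le_cosh a
  have hid : 2 * (cosh a - 1) = exp a * (1 - exp (-a)) ^ 2 := by
    have : exp a * exp (-a) = 1 := by rw [← exp_add]; simp
    rw [cosh_eq]
    linear_combination (2 - exp (-a)) * this
  have hlow : 0 ≤ 1 - exp (-a) := by simp [exp_le_one_iff, ha]
  have hupp : 1 - exp (-a) ≤ a := by linarith [one_sub_le_exp_neg a]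
  calc 2 - 2 / cosh a = 2 * (cosh a - 1) / cosh a := by field_simp
    _ ≤ 2 * (cosh a - 1) := div_le_self (by linarith) hcosh
    _ = exp a * (1 - exp (-a)) ^ 2 := hid
    _ ≤ exp a * a ^ 2 := by gcongr
    _ = a ^ 2 * exp a := mul_comm _ _

namespace MeasureTheory

variable {α : Type*} [MeasurableSpace α] {μ : Measure α} {f g : α → ℝ}

lemma Integrable.sqrt_mul (hf : Integrable f μ) (hg : Integrable g μ)
    (hf₀ : 0 ≤ᵐ[μ] f) (hg₀ : 0 ≤ᵐ[μ] g) : Integrable (fun x ↦ √(f x * g x)) μ := by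
  refine ((hf.add hg).div_const 2).mono' (continuous_sqrt.comp_aestronglyMeasurable
    (hf.aestronglyMeasurable.mul hg.aestronglyMeasurable)) ?_
  filter_upwards [hf₀, hg₀] with x hfx hgx
  rw [norm_of_nonneg (sqrt_nonneg _)]
  exact sqrt_mul_le_add_div_two hfx hgx

noncomputable def hellingerSq (μ : Measure α) (f g : α → ℝ) : ℝ :=
  ∫ x, (√(f x / ∫ u, f u ∂μ) - √(g x / ∫ u, g u ∂μ)) ^ 2 ∂μ

lemma hellingerSq_eq (hf : Integrable f μ) (hg : Integrable g μ) (hf₀ : 0 ≤ᵐ[μ] f)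
    (hg₀ : 0 ≤ᵐ[μ] g) (hA : 0 < ∫ x, f x ∂μ) (hB : 0 < ∫ x, g x ∂μ) :
    hellingerSq μ f g
      = 2 - 2 * (∫ x, √(f x * g x) ∂μ) / √((∫ x, f x ∂μ) * ∫ x, g x ∂μ) := by
  have hsum : Integrable (fun x ↦ f x / ∫ u, f u ∂μ + g x / ∫ u, g u ∂μ) μ :=
    (hf.div_const _).add (hg.div_const _)
  rw [hellingerSq, integral_congr_ae (by
      filter_upwards [hf₀, hg₀] with x hfx hgx using sq_sqrt_div_sub_sqrt_div hfx hgx hA hB),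
    integral_sub hsum (((hf.sqrt_mul hg hf₀ hg₀).const_mul 2).div_const _),
    integral_add (hf.div_const _) (hg.div_const _), integral_div, integral_div, integral_div,
    integral_const_mul, div_self hA.ne', div_self hB.ne']
  ring

lemma hellingerSq_le_two_sub_two_div {c : ℝ} (hf : Integrable f μ) (hg : Integrable g μ)
    (hf₀ : 0 ≤ᵐ[μ] f) (hg₀ : 0 ≤ᵐ[μ] g) (hA : 0 < ∫ x, f x ∂μ) (hB : 0 < ∫ x, g x ∂μ)
    (hfg : ∀ᵐ x ∂μ, f x + g x ≤ 2 * c * √(f x * g x)) :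
    hellingerSq μ f g ≤ 2 - 2 / c := by
  set A := ∫ x, f x ∂μ
  set B := ∫ x, g x ∂μ
  set G := ∫ x, √(f x * g x) ∂μ
  have hG : 0 ≤ G := integral_nonneg fun _ ↦ sqrt_nonneg _
  have hAB : A + B ≤ 2 * c * G := by
    rw [← integral_add hf hg, ← integral_const_mul]
    exact integral_mono_ae (hf.add hg) ((hf.sqrt_mul hg hf₀ hg₀).const_mul _) hfg
  have hc : 0 < c := pos_of_mul_pos_left (by linarith) hG
  have hsqrt : √(A * B) ≤ c * G := by
    linarith [sqrt_mul_le_add_div_two hA.le hB.le]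
  have hratio : 1 / c ≤ G / √(A * B) := by
    rw [div_le_div_iff₀ hc (by positivity)]
    linarith
  rw [hellingerSq_eq hf hg hf₀ hg₀ hA hB, mul_div_assoc, div_eq_mul_one_div 2 c]
  linarith

end MeasureTheory

/-- Hellinger distance bound: for continuous `v, w` on `[0,1]`, writing
`p_w(s) = e^{w(s)} / ∫₀¹ e^{w(u)} du`, one has
`h(p_v, p_w) ≤ ‖v - w‖_∞ e^{‖v - w‖_∞ / 2}`. -/
theorem hellinger_exp_density_bound
    (v w : ℝ → ℝ) (hv : ContinuousOn v (Set.Icc 0 1))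
    (hw : ContinuousOn w (Set.Icc 0 1))
    (M : ℝ) (hM : M = sSup ((fun s => |v s - w s|) '' Set.Icc (0 : ℝ) 1)) :
    Real.sqrt (∫ s in Set.Icc (0 : ℝ) 1,
        (Real.sqrt (Real.exp (v s) / ∫ u in Set.Icc (0 : ℝ) 1, Real.exp (v u)) -
          Real.sqrt (Real.exp (w s) / ∫ u in Set.Icc (0 : ℝ) 1, Real.exp (w u))) ^ 2)
      ≤ M * Real.exp (M / 2) := by
  have hM_le : ∀ s ∈ Set.Icc (0 : ℝ) 1, |v s - w s| ≤ M := fun s hs ↦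
    hM ▸ le_csSup (isCompact_Icc.image_of_continuousOn (hv.sub hw).abs).bddAbove ⟨s, hs, rfl⟩
  have hM₀ : 0 ≤ M := (abs_nonneg _).trans (hM_le 0 ⟨le_rfl, zero_le_one⟩)
  have hint {u : ℝ → ℝ} (hu : ContinuousOn u (Set.Icc 0 1)) :
      IntegrableOn (fun s ↦ exp (u s)) (Set.Icc 0 1) :=
    (continuous_exp.comp_continuousOn hu).integrableOn_Icc
  have hexp₀ {u : ℝ → ℝ} : 0 ≤ᵐ[volume.restrict (Set.Icc (0 : ℝ) 1)] fun s ↦ exp (u s) :=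
    ae_of_all _ fun _ ↦ (exp_pos _).le
  have : NeZero (volume.restrict (Set.Icc (0 : ℝ) 1)) := ⟨by simp⟩
  have hcosh := hellingerSq_le_two_sub_two_div (hint hv) (hint hw) hexp₀ hexp₀
    (integral_exp_pos (hint hv)) (integral_exp_pos (hint hw))
    ((ae_restrict_iff' measurableSet_Icc).2 (ae_of_all _ fun s hs ↦
      exp_add_exp_le_two_mul_cosh_mul_sqrt (hM_le s hs)))
  calc √(hellingerSq _ (fun s ↦ exp (v s)) (fun s ↦ exp (w s)))
      ≤ √((M / 2) ^ 2 * exp (M / 2)) :=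
        sqrt_le_sqrt (hcosh.trans (two_sub_two_div_cosh_le (by positivity)))
    _ = M / 2 * exp (M / 4) := by
        rw [sqrt_mul (by positivity), sqrt_sq (by positivity), ← exp_half]; ring_nf
    _ ≤ M * exp (M / 2) := by gcongr <;> linarith
end

section
/- There exists a universal constant C > 0 such that for all continuous functions v, w : [0,1] → ℝ, both the Kullback–Leibler divergence K(p_v, p_w) = ∫₀¹ p_v(s) log(p_v(s)/p_w(s)) ds and the second moment V(p_v, p_w) = ∫₀¹ p_v(s) (log(p_v(s)/p_w(s)))² ds satisfy max(K(p_v, p_w), V(p_v, p_w)) ≤ C ‖v − w‖_∞² · e^{‖v − w‖_∞ / 2} · (1 + ‖v − w‖_∞)². -/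
/-!
The log-likelihood ratio is `r = log (p_v / p_w) = v - w + log (Z_w / Z_v)`, and the normalising
constants `Z_v, Z_w` differ by a factor of at most `e^M`, so `|r| ≤ 2M`. This bounds `V` by `4M²`
and `K` by `2M`. For small `M` one uses instead that `∫ p_v e^{-r} = ∫ p_w = 1`, so
`K = ∫ p_v (r - 1 + e^{-r})`, whose integrand is at most `r² e^{|r|} p_v`.
-/

open MeasureTheory Real

lemma sub_one_add_exp_neg_le (t : ℝ) : t - 1 + exp (-t) ≤ t ^ 2 * exp |t| := by
  have h1 : exp (-t) * (1 + t) ≤ 1 := by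
    calc exp (-t) * (1 + t) ≤ exp (-t) * exp t := by gcongr; linarith [add_one_le_exp t]
      _ = 1 := by rw [← exp_add]; simp
  have h2 : 1 - t ≤ exp (-t) := by linarith [add_one_le_exp (-t)]
  rcases le_total 0 t with ht | ht
  · rw [abs_of_nonneg ht]
    nlinarith [one_le_exp ht, mul_le_mul_of_nonneg_left h2 ht, sq_nonneg t]
  · rw [abs_of_nonpos ht]
    nlinarith [mul_le_mul_of_nonneg_left h1 (neg_nonneg.2 ht)]

section LogLikelihoodRatio

variable {α : Type*} [MeasurableSpace α] {μ : Measure α} {p q : α → ℝ} {R : ℝ}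

lemma integral_mul_le_of_ae_le {f : α → ℝ} {c : ℝ} (hp0 : ∀ s, 0 ≤ p s)
    (hp : Integrable p μ) (hp1 : ∫ s, p s ∂μ = 1) (hpf : Integrable (fun s ↦ p s * f s) μ)
    (hf : ∀ᵐ s ∂μ, f s ≤ c) : ∫ s, p s * f s ∂μ ≤ c :=
  calc ∫ s, p s * f s ∂μ ≤ ∫ s, p s * c ∂μ :=
        integral_mono_ae hpf (hp.mul_const c)
          (hf.mono fun s hs ↦ mul_le_mul_of_nonneg_left hs (hp0 s))
    _ = c := by rw [integral_mul_const, hp1, one_mul]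

lemma mul_exp_neg_log_div {a b : ℝ} (ha : 0 < a) (hb : 0 < b) :
    a * exp (-log (a / b)) = b := by
  rw [exp_neg, exp_log (div_pos ha hb)]
  field_simp

lemma aestronglyMeasurable_log_div (hpi : Integrable p μ) (hqi : Integrable q μ) :
    AEStronglyMeasurable (fun s ↦ log (p s / q s)) μ :=
  (hpi.aemeasurable.div hqi.aemeasurable).log.aestronglyMeasurable

lemma integral_mul_log_div_le (hp : ∀ s, 0 < p s) (hpi : Integrable p μ) (hqi : Integrable q μ)
    (hp1 : ∫ s, p s ∂μ = 1) (hR : ∀ᵐ s ∂μ, |log (p s / q s)| ≤ R) :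
    ∫ s, p s * log (p s / q s) ∂μ ≤ R :=
  integral_mul_le_of_ae_le (fun s ↦ (hp s).le) hpi hp1
    (hpi.mul_bdd (aestronglyMeasurable_log_div hpi hqi) hR)
    (hR.mono fun _ h ↦ (le_abs_self _).trans h)

lemma integral_mul_sq_log_div_le (hp : ∀ s, 0 < p s) (hpi : Integrable p μ)
    (hqi : Integrable q μ) (hp1 : ∫ s, p s ∂μ = 1) (hR : ∀ᵐ s ∂μ, |log (p s / q s)| ≤ R) :
    ∫ s, p s * log (p s / q s) ^ 2 ∂μ ≤ R ^ 2 := by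
  have hsq : ∀ᵐ s ∂μ, log (p s / q s) ^ 2 ≤ R ^ 2 :=
    hR.mono fun _ h ↦ sq_le_sq' (abs_le.1 h).1 (abs_le.1 h).2
  refine integral_mul_le_of_ae_le (fun s ↦ (hp s).le) hpi hp1 ?_ hsq
  refine hpi.mul_bdd ((aestronglyMeasurable_log_div hpi hqi).pow 2) (c := R ^ 2) ?_
  filter_upwards [hsq] with _ hs
  simpa using hs

lemma integral_mul_log_div_le_sq_mul_exp (hp : ∀ s, 0 < p s) (hq : ∀ s, 0 < q s)
    (hpi : Integrable p μ) (hqi : Integrable q μ) (hp1 : ∫ s, p s ∂μ = 1)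
    (hq1 : ∫ s, q s ∂μ = 1) (hR : ∀ᵐ s ∂μ, |log (p s / q s)| ≤ R) :
    ∫ s, p s * log (p s / q s) ∂μ ≤ R ^ 2 * exp R := by
  set r := fun s ↦ log (p s / q s)
  have hpr : Integrable (fun s ↦ p s * r s) μ :=
    hpi.mul_bdd (aestronglyMeasurable_log_div hpi hqi) hR
  have hsplit : ∀ s, p s * (r s - 1 + exp (-r s)) = p s * r s - p s + q s := fun s ↦ by
    rw [mul_add, mul_exp_neg_log_div (hp s) (hq s), mul_sub, mul_one]
  -- adding `∫ p (exp (-r) - 1) = ∫ q - ∫ p = 0` makes the integrand pointwise quadratic in `r`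
  have hK : ∫ s, p s * r s ∂μ = ∫ s, p s * (r s - 1 + exp (-r s)) ∂μ := by
    simp_rw [hsplit]
    rw [integral_add (f := fun s ↦ p s * r s - p s) (hpr.sub hpi) hqi, integral_sub hpr hpi,
      hp1, hq1, sub_add_cancel]
  rw [hK]
  refine integral_mul_le_of_ae_le (fun s ↦ (hp s).le) hpi hp1 ?_ ?_
  · simp_rw [hsplit]
    exact (hpr.sub hpi).add hqi
  filter_upwards [hR] with s hs
  calc r s - 1 + exp (-r s) ≤ r s ^ 2 * exp |r s| := sub_one_add_exp_neg_le _
    _ ≤ R ^ 2 * exp R :=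
      mul_le_mul (sq_le_sq' (abs_le.1 hs).1 (abs_le.1 hs).2) (exp_le_exp.2 hs) (exp_pos _).le
        (sq_nonneg R)

lemma integral_mul_log_div_le_three_mul_sq (hp : ∀ s, 0 < p s) (hq : ∀ s, 0 < q s)
    (hpi : Integrable p μ) (hqi : Integrable q μ) (hp1 : ∫ s, p s ∂μ = 1)
    (hq1 : ∫ s, q s ∂μ = 1) (hR : ∀ᵐ s ∂μ, |log (p s / q s)| ≤ R) :
    ∫ s, p s * log (p s / q s) ∂μ ≤ 3 * R ^ 2 := by
  rcases le_or_gt R 1 with hR1 | hR1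
  · calc ∫ s, p s * log (p s / q s) ∂μ ≤ R ^ 2 * exp R :=
          integral_mul_log_div_le_sq_mul_exp hp hq hpi hqi hp1 hq1 hR
      _ ≤ R ^ 2 * 3 := by gcongr; exact (exp_le_exp.2 hR1).trans exp_one_lt_three.le
      _ = 3 * R ^ 2 := mul_comm _ _
  · nlinarith [integral_mul_log_div_le hp hpi hqi hp1 hR]

end LogLikelihoodRatio

section ExpDensity

variable {α : Type*} [MeasurableSpace α] {μ : Measure α} {v w : α → ℝ} {M : ℝ}

noncomputable def expDensity (μ : Measure α) (w : α → ℝ) (s : α) : ℝ :=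
  exp (w s) / ∫ u, exp (w u) ∂μ

lemma integrable_expDensity (hv : Integrable (fun s ↦ exp (v s)) μ) :
    Integrable (expDensity μ v) μ :=
  hv.div_const _

variable [NeZero μ]

lemma expDensity_pos (hv : Integrable (fun s ↦ exp (v s)) μ) (s : α) : 0 < expDensity μ v s :=
  div_pos (exp_pos _) (integral_exp_pos hv)

lemma integral_expDensity (hv : Integrable (fun s ↦ exp (v s)) μ) :
    ∫ s, expDensity μ v s ∂μ = 1 := by
  simp only [expDensity]
  rw [integral_div, div_self (integral_exp_pos hv).ne']

lemma log_integral_exp_le (hv : Integrable (fun s ↦ exp (v s)) μ)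
    (hw : Integrable (fun s ↦ exp (w s)) μ) (hvw : ∀ᵐ s ∂μ, v s ≤ w s + M) :
    log (∫ s, exp (v s) ∂μ) ≤ log (∫ s, exp (w s) ∂μ) + M := by
  have hle : ∫ s, exp (v s) ∂μ ≤ (∫ s, exp (w s) ∂μ) * exp M := by
    rw [← integral_mul_const]
    refine integral_mono_ae hv (hw.mul_const _) ?_
    filter_upwards [hvw] with s hs
    rw [← exp_add]
    exact exp_le_exp.2 hs
  calc log (∫ s, exp (v s) ∂μ) ≤ log ((∫ s, exp (w s) ∂μ) * exp M) :=
        log_le_log (integral_exp_pos hv) hle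
    _ = log (∫ s, exp (w s) ∂μ) + M := by
      rw [log_mul (integral_exp_pos hw).ne' (exp_pos M).ne', log_exp]

lemma abs_log_expDensity_div_le (hv : Integrable (fun s ↦ exp (v s)) μ)
    (hw : Integrable (fun s ↦ exp (w s)) μ) (hvw : ∀ᵐ s ∂μ, |v s - w s| ≤ M) :
    ∀ᵐ s ∂μ, |log (expDensity μ v s / expDensity μ w s)| ≤ 2 * M := by
  have hv_le := log_integral_exp_le hv hw (hvw.mono fun s h ↦ by linarith [(abs_le.1 h).2])
  have hw_le := log_integral_exp_le hw hv (hvw.mono fun s h ↦ by linarith [(abs_le.1 h).1])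
  filter_upwards [hvw] with s hs
  have hZv := integral_exp_pos hv
  have hZw := integral_exp_pos hw
  rw [expDensity, expDensity, log_div (by positivity) (by positivity),
    log_div (exp_pos _).ne' hZv.ne', log_div (exp_pos _).ne' hZw.ne', log_exp, log_exp]
  rw [abs_le] at hs ⊢
  constructor <;> linarith [hs.1, hs.2]

lemma max_integral_expDensity_log_div_le (hv : Integrable (fun s ↦ exp (v s)) μ)
    (hw : Integrable (fun s ↦ exp (w s)) μ) (hvw : ∀ᵐ s ∂μ, |v s - w s| ≤ M) :
    max (∫ s, expDensity μ v s * log (expDensity μ v s / expDensity μ w s) ∂μ)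
        (∫ s, expDensity μ v s * log (expDensity μ v s / expDensity μ w s) ^ 2 ∂μ)
      ≤ 12 * M ^ 2 := by
  have hR := abs_log_expDensity_div_le hv hw hvw
  have hK := integral_mul_log_div_le_three_mul_sq (expDensity_pos hv) (expDensity_pos hw)
    (integrable_expDensity hv) (integrable_expDensity hw) (integral_expDensity hv)
    (integral_expDensity hw) hR
  have hV := integral_mul_sq_log_div_le (expDensity_pos hv) (integrable_expDensity hv)
    (integrable_expDensity hw) (integral_expDensity hv) hR
  exact max_le (hK.trans_eq (by ring)) (hV.trans (by nlinarith [sq_nonneg M]))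

end ExpDensity

/-- Kullback-Leibler type bound (Lemma 3.1 in van der Vaart–van Zanten): there is a
universal constant `C > 0` such that for all continuous `v, w` on `[0,1]`, writing
`p_w(s) = e^{w(s)} / ∫₀¹ e^{w(u)} du` and `M = ‖v - w‖_∞`,
`max(K(p_v,p_w), V(p_v,p_w)) ≤ C M² e^{M/2} (1 + M)²`. -/
theorem kl_exp_density_bound :
    ∃ C > (0 : ℝ), ∀ v w : ℝ → ℝ, ContinuousOn v (Set.Icc 0 1) →
      ContinuousOn w (Set.Icc 0 1) →
      ∀ M : ℝ, M = sSup ((fun s => |v s - w s|) '' Set.Icc (0 : ℝ) 1) →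
      max
        (∫ s in Set.Icc (0 : ℝ) 1,
          (Real.exp (v s) / ∫ u in Set.Icc (0 : ℝ) 1, Real.exp (v u)) *
            Real.log ((Real.exp (v s) / ∫ u in Set.Icc (0 : ℝ) 1, Real.exp (v u)) /
              (Real.exp (w s) / ∫ u in Set.Icc (0 : ℝ) 1, Real.exp (w u))))
        (∫ s in Set.Icc (0 : ℝ) 1,
          (Real.exp (v s) / ∫ u in Set.Icc (0 : ℝ) 1, Real.exp (v u)) *
            (Real.log ((Real.exp (v s) / ∫ u in Set.Icc (0 : ℝ) 1, Real.exp (v u)) /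
              (Real.exp (w s) / ∫ u in Set.Icc (0 : ℝ) 1, Real.exp (w u)))) ^ 2)
      ≤ C * M ^ 2 * Real.exp (M / 2) * (1 + M) ^ 2 := by
  refine ⟨12, by norm_num, fun v w hv hw M hM ↦ ?_⟩
  have : NeZero (volume.restrict (Set.Icc (0 : ℝ) 1)) := ⟨by simp⟩
  have hexp : ∀ f : ℝ → ℝ, ContinuousOn f (Set.Icc 0 1) →
      Integrable (fun s ↦ exp (f s)) (volume.restrict (Set.Icc 0 1)) :=
    fun f hf ↦ (continuous_exp.comp_continuousOn hf).integrableOn_Icc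
  have hvw : ∀ s ∈ Set.Icc (0 : ℝ) 1, |v s - w s| ≤ M := fun s hs ↦
    hM ▸ le_csSup (isCompact_Icc.image_of_continuousOn (hv.sub hw).abs).bddAbove ⟨s, hs, rfl⟩
  have hM0 : 0 ≤ M := (abs_nonneg _).trans (hvw 0 ⟨le_rfl, zero_le_one⟩)
  calc _ ≤ 12 * M ^ 2 := max_integral_expDensity_log_div_le (hexp v hv) (hexp w hw)
          (ae_restrict_of_forall_mem measurableSet_Icc hvw)
    _ ≤ 12 * M ^ 2 * exp (M / 2) * (1 + M) ^ 2 := by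
      have : 1 ≤ exp (M / 2) * (1 + M) ^ 2 :=
        one_le_mul_of_one_le_of_one_le (one_le_exp (by positivity)) (by nlinarith)
      nlinarith [sq_nonneg M]
end

section
/- Let δ ∈ (0,1) and let f : ℝ → ℝ be bounded and Hölder of order δ. Then there exists a constant C > 0 (depending only on f and δ) such that for every integrable function g : ℝ → ℝ with compact support satisfying ∫ g(u) du = 0 and every t ∈ [0,1]: |I^{1−δ}(f ∗ g)(t)| ≤ C ∫ |u| (1 + log(1 + t/|u|)) |g(u)| du, where (f ∗ g)(s) = ∫ f(s − u) g(u) du. -/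
open MeasureTheory

/-- The (unnormalized) fractional integral of order `γ`:
`I^γ h (t) = ∫₀ᵗ (t - s)^(γ-1) h(s) ds` for `t > 0` and `0` for `t ≤ 0`. -/
noncomputable def fracInt (γ : ℝ) (h : ℝ → ℝ) (t : ℝ) : ℝ :=
  if 0 < t then ∫ s in (0 : ℝ)..t, (t - s) ^ (γ - 1) * h s else 0

/-- Convolution `(f ∗ g)(s) = ∫ f(s - u) g(u) du`. -/
noncomputable def conv (f g : ℝ → ℝ) (s : ℝ) : ℝ := ∫ u, f (s - u) * g u

/-!
Since `g` has mean zero, `(f ∗ g)(s) = ∫ (f (s - u) - f s) g(u) du`, and Fubini turns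
`I^{1-δ}(f ∗ g)(t)` into `∫ K(t, u) g(u) du` with `K(t, u) = I^{1-δ}(f(· - u) - f)(t)`; it
remains to show `|K(t, u)| ≲ |u| (1 + log (1 + t/|u|))`. Substituting `r = t - s` and writing
`e(q) = f(t - q) - f(t)`, so that `|e q| ≤ H |q|^δ`, gives `K = ∫₀ᵗ r^{-δ} (e(r + u) - e(r)) dr`
(take `u > 0`; the case `u < 0` is the same after recentring). For `t ≤ 2u` the increment bound
`|e(r + u) - e(r)| ≤ H u^δ` suffices. Otherwise the shifted part becomes
`∫ (q - u)^{-δ} e(q) dq`, and on `[2u, t]` the kernel difference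
`(q - u)^{-δ} - q^{-δ} ≤ q^{-δ} u/(q - u)` against `H q^δ` leaves `H u/(q - u)`, whose integral
is the logarithm; the remaining pieces live on intervals of length `≲ u`.
-/

open Real intervalIntegral Set Filter Topology
open scoped Interval

theorem MeasureTheory.Integrable.continuous_mul_of_hasCompactSupport {X R : Type*}
    [TopologicalSpace X] [T2Space X] [MeasurableSpace X] [OpensMeasurableSpace X] {μ : Measure X}
    [NormedRing R] [SecondCountableTopologyEither X R] {g φ : X → R}
    (hg : Integrable g μ) (hgc : HasCompactSupport g) (hφ : Continuous φ) :
    Integrable (fun x => φ x * g x) μ := by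
  refine (integrableOn_iff_integrable_of_support_subset ?_).1
    (hg.integrableOn.continuousOn_mul hφ.continuousOn hgc)
  exact (Function.support_mul_subset_right _ _).trans (subset_tsupport g)

theorem rpow_mul_rpow_one_sub_le {δ x y c : ℝ} (hδ0 : 0 ≤ δ) (hδ1 : δ ≤ 1) (hx : 0 ≤ x)
    (hy : 0 ≤ y) (hxc : x ≤ c) (hyc : y ≤ c) : x ^ δ * y ^ (1 - δ) ≤ c := by
  have := geom_mean_le_arith_mean2_weighted hδ0 (sub_nonneg.2 hδ1) hx hy (by ring)
  nlinarith

theorem continuous_of_abs_sub_le_mul_rpow {f : ℝ → ℝ} {H δ : ℝ} (hδ : 0 < δ)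
    (hH : ∀ x y, |f x - f y| ≤ H * |x - y| ^ δ) : Continuous f := by
  refine continuous_iff_continuousAt.2 fun x => tendsto_iff_norm_sub_tendsto_zero.2 ?_
  have hlim : Tendsto (fun y => H * |y - x| ^ δ) (𝓝 x) (𝓝 0) := by
    have : Continuous fun y : ℝ => H * |y - x| ^ δ := by fun_prop (disch := exact hδ.le)
    simpa [zero_rpow hδ.ne'] using this.tendsto x
  exact squeeze_zero (fun _ => norm_nonneg _) (fun y => hH y x) hlim

theorem sub_rpow_neg_mul_rpow_le_div {δ u q : ℝ} (hδ1 : δ ≤ 1) (hu : 0 ≤ u)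
    (huq : u < q) : (q - u) ^ (-δ) * q ^ δ ≤ q / (q - u) := by
  have hqu : 0 < q - u := by linarith
  calc (q - u) ^ (-δ) * q ^ δ = (q / (q - u)) ^ δ := by
        rw [div_rpow (by linarith) hqu.le, rpow_neg hqu.le, inv_mul_eq_div]
    _ ≤ q / (q - u) := rpow_le_self_of_one_le ((one_le_div hqu).2 (by linarith)) hδ1

section RpowKernel

variable {δ H : ℝ} {e : ℝ → ℝ}

theorem intervalIntegrable_sub_rpow_mul (hδ : δ < 1) (he : Continuous e) (c a b : ℝ) :
    IntervalIntegrable (fun q => (q - c) ^ (-δ) * e q) volume a b := by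
  simpa using ((intervalIntegrable_rpow' (r := -δ) (by linarith) (a := a - c)
    (b := b - c)).comp_sub_right c).mul_continuousOn he.continuousOn

theorem abs_integral_sub_rpow_mul_le {φ : ℝ → ℝ} {a b M : ℝ} (hδ : δ < 1) (hab : a ≤ b)
    (hφ : ∀ q ∈ Ioc a b, |φ q| ≤ M) :
    |∫ q in a..b, (q - a) ^ (-δ) * φ q| ≤ M * (b - a) ^ (1 - δ) / (1 - δ) := by
  have hbound : ∀ q ∈ Ioc a b, ‖(q - a) ^ (-δ) * φ q‖ ≤ (q - a) ^ (-δ) * M := by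
    intro q hq
    have hq0 : 0 ≤ q - a := by linarith [hq.1]
    rw [norm_mul, norm_of_nonneg (rpow_nonneg hq0 _)]
    exact mul_le_mul_of_nonneg_left (hφ q hq) (rpow_nonneg hq0 _)
  calc |∫ q in a..b, (q - a) ^ (-δ) * φ q|
      ≤ ∫ q in a..b, (q - a) ^ (-δ) * M := norm_integral_le_of_norm_le hab
        (ae_of_all _ hbound) (intervalIntegrable_sub_rpow_mul hδ continuous_const a a b)
    _ = M * (b - a) ^ (1 - δ) / (1 - δ) := by
        rw [intervalIntegral.integral_mul_const, integral_comp_sub_right (fun q => q ^ (-δ)),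
          sub_self, integral_rpow (Or.inl (by linarith)), zero_rpow (by linarith)]
        ring_nf

theorem integral_rpow_mul_shift_sub_eq (hδ : δ < 1) (he : Continuous e) (u t : ℝ) :
    ∫ r in 0..t, r ^ (-δ) * (e (r + u) - e r) =
      (∫ q in u..2 * u, (q - u) ^ (-δ) * e q)
        + (∫ q in 2 * u..t, ((q - u) ^ (-δ) - q ^ (-δ)) * e q)
        + (∫ q in t..t + u, (q - u) ^ (-δ) * e q) - ∫ q in 0..2 * u, q ^ (-δ) * e q := by
  have hI := intervalIntegrable_sub_rpow_mul hδ he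
  have hI0 : ∀ a b, IntervalIntegrable (fun q => q ^ (-δ) * e q) volume a b := by
    simpa using hI 0
  have hshift : ∫ r in 0..t, r ^ (-δ) * e (r + u) = ∫ q in u..t + u, (q - u) ^ (-δ) * e q := by
    simpa using integral_comp_add_right (fun q => (q - u) ^ (-δ) * e q) u (a := 0) (b := t)
  simp only [mul_sub, sub_mul]
  rw [integral_sub ?_ (hI0 0 t), hshift, integral_sub (hI u (2 * u) t) (hI0 (2 * u) t),
    ← integral_add_adjacent_intervals (hI u u (2 * u)) ((hI u (2 * u) t).trans (hI u t (t + u))),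
    ← integral_add_adjacent_intervals (hI u (2 * u) t) (hI u t (t + u)),
    ← integral_add_adjacent_intervals (hI0 0 (2 * u)) (hI0 (2 * u) t)]
  · ring
  · simpa using (hI u u (t + u)).comp_add_right u

theorem abs_integral_rpow_neg_mul_le (heb : ∀ q, |e q| ≤ H * |q| ^ δ) {b : ℝ} (hb : 0 ≤ b) :
    |∫ q in 0..b, q ^ (-δ) * e q| ≤ H * b := by
  have hbound : ∀ q ∈ Ι 0 b, ‖q ^ (-δ) * e q‖ ≤ H := by
    intro q hq
    rw [uIoc_of_le hb] at hq
    have hq0 : 0 < q := hq.1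
    calc ‖q ^ (-δ) * e q‖ = q ^ (-δ) * |e q| := by
          rw [norm_mul, norm_of_nonneg (rpow_nonneg hq0.le _), norm_eq_abs]
      _ ≤ q ^ (-δ) * (H * q ^ δ) := by gcongr; simpa [abs_of_pos hq0] using heb q
      _ = H := by rw [rpow_neg hq0.le]; field_simp [(rpow_pos_of_pos hq0 δ).ne']
  simpa [abs_of_nonneg hb] using norm_integral_le_of_norm_le_const hbound

theorem abs_integral_sub_rpow_mul_le_two_mul (hδ0 : 0 < δ) (hδ1 : δ < 1)
    (heb : ∀ q, |e q| ≤ H * |q| ^ δ) {u : ℝ} (hu : 0 ≤ u) :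
    |∫ q in u..2 * u, (q - u) ^ (-δ) * e q| ≤ 2 * (H * u / (1 - δ)) := by
  have hH : 0 ≤ H := (abs_nonneg _).trans (by simpa using heb 1)
  have h1δ : 0 < 1 - δ := sub_pos.2 hδ1
  have hM : ∀ q ∈ Ioc u (2 * u), |e q| ≤ H * (2 * u) ^ δ := fun q hq => by
    have hq0 : 0 ≤ q := hu.trans hq.1.le
    calc |e q| ≤ H * |q| ^ δ := heb q
      _ ≤ H * (2 * u) ^ δ := by rw [abs_of_nonneg hq0]; gcongr; exact hq.2
  calc _ ≤ H * (2 * u) ^ δ * (2 * u - u) ^ (1 - δ) / (1 - δ) :=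
        abs_integral_sub_rpow_mul_le hδ1 (by linarith) hM
    _ ≤ H * (2 * u) / (1 - δ) := by
        rw [mul_assoc]
        gcongr H * ?_ / _
        exact rpow_mul_rpow_one_sub_le hδ0.le hδ1.le (by linarith) (by linarith) le_rfl
          (by linarith)
    _ = _ := by ring

theorem abs_integral_sub_rpow_mul_le_of_two_mul_le (hδ1 : δ ≤ 1)
    (heb : ∀ q, |e q| ≤ H * |q| ^ δ) {u a : ℝ} (hu : 0 ≤ u) (hua : 2 * u ≤ a) :
    |∫ q in a..a + u, (q - u) ^ (-δ) * e q| ≤ 2 * H * u := by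
  have hH : 0 ≤ H := (abs_nonneg _).trans (by simpa using heb 1)
  have hbound : ∀ q ∈ Ι a (a + u), ‖(q - u) ^ (-δ) * e q‖ ≤ 2 * H := by
    intro q hq
    rw [uIoc_of_le (by linarith)] at hq
    have huq : u < q := by linarith [hq.1]
    have hq0 : 0 < q := by linarith
    calc ‖(q - u) ^ (-δ) * e q‖ = (q - u) ^ (-δ) * |e q| := by
          rw [norm_mul, norm_of_nonneg (rpow_nonneg (by linarith) _), norm_eq_abs]
      _ ≤ (q - u) ^ (-δ) * (H * q ^ δ) := by gcongr; simpa [abs_of_pos hq0] using heb q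
      _ = H * ((q - u) ^ (-δ) * q ^ δ) := by ring
      _ ≤ H * (q / (q - u)) := by gcongr; exact sub_rpow_neg_mul_rpow_le_div hδ1 hu huq
      _ ≤ H * 2 := by gcongr; rw [div_le_iff₀ (by linarith)]; linarith [hq.1]
      _ = 2 * H := by ring
  simpa [abs_of_nonneg hu] using norm_integral_le_of_norm_le_const hbound

theorem abs_integral_sub_rpow_sub_rpow_mul_le (hδ0 : 0 ≤ δ) (hδ1 : δ ≤ 1)
    (heb : ∀ q, |e q| ≤ H * |q| ^ δ) {u t : ℝ} (hu : 0 < u) (hut : 2 * u ≤ t) :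
    |∫ q in 2 * u..t, ((q - u) ^ (-δ) - q ^ (-δ)) * e q| ≤ H * u * log (1 + t / u) := by
  have hH : 0 ≤ H := (abs_nonneg _).trans (by simpa using heb 1)
  have hbound : ∀ q ∈ Ioc (2 * u) t,
      ‖((q - u) ^ (-δ) - q ^ (-δ)) * e q‖ ≤ H * u * (q - u)⁻¹ := by
    intro q hq
    have huq : u < q := by linarith [hq.1]
    have hqu : 0 < q - u := by linarith
    have hq0 : 0 < q := by linarith
    have hdiff : 0 ≤ (q - u) ^ (-δ) - q ^ (-δ) :=
      sub_nonneg.2 (rpow_le_rpow_of_nonpos hqu (by linarith) (by linarith))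
    calc ‖((q - u) ^ (-δ) - q ^ (-δ)) * e q‖ = ((q - u) ^ (-δ) - q ^ (-δ)) * |e q| := by
          rw [norm_mul, norm_of_nonneg hdiff, norm_eq_abs]
      _ ≤ ((q - u) ^ (-δ) - q ^ (-δ)) * (H * q ^ δ) := by
          gcongr; simpa [abs_of_pos hq0] using heb q
      _ = H * ((q - u) ^ (-δ) * q ^ δ - 1) := by
          rw [rpow_neg hq0.le]; field_simp [(rpow_pos_of_pos hq0 δ).ne']
      _ ≤ H * (q / (q - u) - 1) := by gcongr; exact sub_rpow_neg_mul_rpow_le_div hδ1 hu.le huq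
      _ = H * u * (q - u)⁻¹ := by field_simp; ring
  have hint : IntervalIntegrable (fun q => H * u * (q - u)⁻¹) volume (2 * u) t := by
    refine ContinuousOn.intervalIntegrable
      (continuousOn_const.mul ((continuousOn_id.sub continuousOn_const).inv₀ fun q hq => ?_))
    rw [uIcc_of_le hut] at hq
    exact show q - u ≠ 0 by linarith [hq.1]
  calc _ ≤ ∫ q in 2 * u..t, H * u * (q - u)⁻¹ :=
        norm_integral_le_of_norm_le hut (ae_of_all _ hbound) hint
    _ = H * u * log ((t - u) / u) := by
        rw [intervalIntegral.integral_const_mul, integral_comp_sub_right (fun q => q⁻¹),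
          integral_inv_of_pos (by linarith) (by linarith)]
        ring_nf
    _ ≤ H * u * log (1 + t / u) := by
        gcongr
        · exact div_pos (by linarith) hu
        · rw [sub_div, div_self hu.ne']; linarith

theorem abs_integral_rpow_mul_shift_sub_le_of_pos (hδ0 : 0 < δ) (hδ1 : δ < 1)
    (heH : ∀ x y, |e x - e y| ≤ H * |x - y| ^ δ) (he0 : e 0 = 0) {u t : ℝ} (hu : 0 < u)
    (ht : 0 ≤ t) :
    |∫ r in 0..t, r ^ (-δ) * (e (r + u) - e r)|
      ≤ 6 * H / (1 - δ) * (u * (1 + log (1 + t / u))) := by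
  have heb : ∀ q, |e q| ≤ H * |q| ^ δ := fun q => by simpa [he0] using heH q 0
  have hH : 0 ≤ H := (abs_nonneg _).trans (by simpa using heb 1)
  have h1δ : 0 < 1 - δ := sub_pos.2 hδ1
  have hL : 0 ≤ log (1 + t / u) := log_nonneg (by have := div_nonneg ht hu.le; linarith)
  have hX : H * u ≤ H * u / (1 - δ) := le_div_self (by positivity) h1δ (by linarith)
  have hgoal : 6 * H / (1 - δ) * (u * (1 + log (1 + t / u)))
      = 6 * (H * u / (1 - δ)) * (1 + log (1 + t / u)) := by ring
  rw [hgoal]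
  rcases le_or_gt t (2 * u) with hsmall | hlarge
  · have hcrude := abs_integral_sub_rpow_mul_le (a := 0) (M := H * u ^ δ) hδ1 ht
      (fun r _ => by simpa [abs_of_pos hu] using heH (r + u) r)
    simp only [sub_zero] at hcrude
    have hcrude' : H * u ^ δ * t ^ (1 - δ) / (1 - δ) ≤ 2 * (H * u / (1 - δ)) := by
      calc _ ≤ H * (2 * u) / (1 - δ) := by
            rw [mul_assoc]
            gcongr H * ?_ / _
            exact rpow_mul_rpow_one_sub_le hδ0.le hδ1.le hu.le ht (by linarith) hsmall
        _ = _ := by ring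
    nlinarith [mul_nonneg (div_nonneg (mul_nonneg hH hu.le) h1δ.le) hL]
  · rw [integral_rpow_mul_shift_sub_eq hδ1 (continuous_of_abs_sub_le_mul_rpow hδ0 heH)]
    have hnear := abs_integral_sub_rpow_mul_le_two_mul hδ0 hδ1 heb hu.le
    have hmiddle := abs_integral_sub_rpow_sub_rpow_mul_le hδ0.le hδ1.le heb hu hlarge.le
    have hfar := abs_integral_sub_rpow_mul_le_of_two_mul_le hδ1.le heb hu.le hlarge.le
    have hzero := abs_integral_rpow_neg_mul_le heb (b := 2 * u) (by linarith)
    refine (abs_sub _ _).trans ((add_le_add_left (abs_add_three _ _ _) _).trans ?_)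
    nlinarith [mul_le_mul_of_nonneg_right hX hL,
      mul_nonneg (div_nonneg (mul_nonneg hH hu.le) h1δ.le) hL]

theorem abs_integral_rpow_mul_shift_sub_le (hδ0 : 0 < δ) (hδ1 : δ < 1)
    (heH : ∀ x y, |e x - e y| ≤ H * |x - y| ^ δ) {t : ℝ} (ht : 0 ≤ t) (u : ℝ) :
    |∫ r in 0..t, r ^ (-δ) * (e (r + u) - e r)|
      ≤ 6 * H / (1 - δ) * (|u| * (1 + log (1 + t / |u|))) := by
  rcases lt_trichotomy u 0 with hu | rfl | hu
  · have h := abs_integral_rpow_mul_shift_sub_le_of_pos hδ0 hδ1 (e := fun q => e (q + u) - e u)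
      (fun x y => by simpa using heH (x + u) (y + u)) (by simp) (neg_pos.2 hu) ht
    have hflip : ∫ r in 0..t, r ^ (-δ) * (e (r + -u + u) - e u - (e (r + u) - e u))
        = -∫ r in 0..t, r ^ (-δ) * (e (r + u) - e r) := by
      rw [← intervalIntegral.integral_neg]
      congr 1 with r
      rw [neg_add_cancel_right]
      ring
    rwa [hflip, abs_neg, ← abs_of_neg hu] at h
  · simp
  · simpa [abs_of_pos hu] using abs_integral_rpow_mul_shift_sub_le_of_pos hδ0 hδ1
      (e := fun q => e q - e 0) (fun x y => by simpa using heH x y) (by simp) hu ht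

end RpowKernel

theorem abs_fracInt_shift_sub_le {f : ℝ → ℝ} {δ H : ℝ} (hδ0 : 0 < δ) (hδ1 : δ < 1)
    (hH : ∀ x y, |f x - f y| ≤ H * |x - y| ^ δ) {t : ℝ} (ht : 0 ≤ t) (u : ℝ) :
    |fracInt (1 - δ) (fun s => f (s - u) - f s) t|
      ≤ 6 * H / (1 - δ) * (|u| * (1 + log (1 + t / |u|))) := by
  have hbound := abs_integral_rpow_mul_shift_sub_le hδ0 hδ1 (e := fun q => f (t - q))
    (fun x y => by simpa [abs_sub_comm] using hH (t - x) (t - y)) ht u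
  unfold fracInt
  split_ifs with ht0
  · have hsubst := integral_comp_sub_left
      (fun r => r ^ (-δ) * (f (t - (r + u)) - f (t - r))) t (a := 0) (b := t)
    simp only [sub_self, sub_zero, sub_sub_cancel, ← sub_sub] at hsubst hbound
    rwa [show 1 - δ - 1 = -δ by ring, hsubst]
  · rw [abs_zero]
    exact (abs_nonneg _).trans hbound

theorem conv_eq_integral_sub_mul {f g : ℝ → ℝ} (hf : Continuous f) (hg : Integrable g)
    (hgc : HasCompactSupport g) (hg0 : ∫ u, g u = 0) (s : ℝ) :
    conv f g s = ∫ u, (f (s - u) - f s) * g u := by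
  have hfg : Integrable (fun u => f (s - u) * g u) :=
    hg.continuous_mul_of_hasCompactSupport hgc (by fun_prop)
  simp_rw [sub_mul]
  rw [integral_sub hfg (hg.const_mul (f s)), MeasureTheory.integral_const_mul, hg0, mul_zero,
    sub_zero]
  rfl

theorem fracInt_conv_eq_integral_fracInt_mul {f g : ℝ → ℝ} {γ δ H : ℝ} (hγ : 0 < γ) (hδ : 0 < δ)
    (hH : ∀ x y, |f x - f y| ≤ H * |x - y| ^ δ) (hg : Integrable g) (hgc : HasCompactSupport g)
    (hg0 : ∫ u, g u = 0) (t : ℝ) :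
    fracInt γ (conv f g) t = ∫ u, fracInt γ (fun s => f (s - u) - f s) t * g u := by
  unfold fracInt
  split_ifs with ht
  swap
  · simp
  have hf := continuous_of_abs_sub_le_mul_rpow hδ hH
  have hker : Integrable (fun s => (t - s) ^ (γ - 1)) (volume.restrict (Ioc 0 t)) := by
    have h := (intervalIntegrable_rpow' (r := γ - 1) (by linarith) (a := t) (b := 0)).comp_sub_left
      t
    rw [sub_self, sub_zero] at h
    exact (intervalIntegrable_iff_integrableOn_Ioc_of_le ht.le).1 h
  have hgw : Integrable (fun u => H * |u| ^ δ * g u) :=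
    hg.continuous_mul_of_hasCompactSupport hgc (by fun_prop (disch := exact hδ.le))
  have hF : Integrable (Function.uncurry fun s u => (t - s) ^ (γ - 1) * ((f (s - u) - f s) * g u))
      ((volume.restrict (Ioc 0 t)).prod volume) := by
    refine (hker.mul_prod hgw).mono ?_ (ae_of_all _ fun ⟨s, u⟩ => ?_)
    · exact (Measurable.aestronglyMeasurable (by fun_prop)).mul
        ((Measurable.aestronglyMeasurable (by fun_prop)).mul hg.1.comp_snd)
    · simp only [Function.uncurry_apply_pair, norm_mul, norm_eq_abs]
      gcongr
      calc |f (s - u) - f s| ≤ H * |u| ^ δ := by simpa using hH (s - u) s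
        _ ≤ |H * |u| ^ δ| := le_abs_self _
        _ = |H| * |(|u| ^ δ)| := abs_mul _ _
  simp_rw [integral_of_le ht.le, conv_eq_integral_sub_mul hf hg hgc hg0,
    ← MeasureTheory.integral_const_mul]
  rw [integral_integral_swap hF]
  congr 1 with u
  rw [← MeasureTheory.integral_mul_const]
  congr 1 with s
  ring

theorem abs_mul_one_add_log_one_add_div_le {t : ℝ} (ht : 0 ≤ t) (u : ℝ) :
    |u| * (1 + log (1 + t / |u|)) ≤ |u| + t := by
  rcases eq_or_ne u 0 with rfl | hu
  · simpa using ht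
  have hu' : 0 < |u| := abs_pos.2 hu
  have hlog : log (1 + t / |u|) ≤ t / |u| := by
    linarith [log_le_sub_one_of_pos (show 0 < 1 + t / |u| by positivity)]
  calc |u| * (1 + log (1 + t / |u|)) ≤ |u| * (1 + t / |u|) := by gcongr
    _ = |u| + t := by field_simp

theorem integrable_abs_mul_one_add_log_mul_abs {g : ℝ → ℝ} (hg : Integrable g)
    (hgc : HasCompactSupport g) {t : ℝ} (ht : 0 ≤ t) :
    Integrable (fun u => |u| * (1 + log (1 + t / |u|)) * |g u|) := by
  have hdom : Integrable (fun u => (|u| + t) * |g u|) :=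
    hg.abs.continuous_mul_of_hasCompactSupport hgc.abs (by fun_prop)
  refine hdom.mono' ((Measurable.aestronglyMeasurable (by fun_prop)).mul hg.abs.1)
    (ae_of_all _ fun u => ?_)
  have hlog : 0 ≤ log (1 + t / |u|) :=
    log_nonneg (by have := div_nonneg ht (abs_nonneg u); linarith)
  rw [norm_of_nonneg (by positivity)]
  gcongr
  exact abs_mul_one_add_log_one_add_div_le ht u

theorem fracInt_conv_pointwise_bound_general
    (δ : ℝ) (hδ : δ ∈ Set.Ioo (0 : ℝ) 1)
    (f : ℝ → ℝ)
    (H : ℝ) (hH : ∀ x y, |f x - f y| ≤ H * |x - y| ^ δ) :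
    ∃ C > (0 : ℝ), ∀ g : ℝ → ℝ, Integrable g → HasCompactSupport g →
      (∫ u, g u) = 0 →
      ∀ t ∈ Set.Icc (0 : ℝ) 1,
        |fracInt (1 - δ) (conv f g) t|
          ≤ C * ∫ u, |u| * (1 + Real.log (1 + t / |u|)) * |g u| := by
  obtain ⟨hδ0, hδ1⟩ := hδ
  have hH0 : 0 ≤ H := by simpa using (abs_nonneg _).trans (hH 1 0)
  -- `H + 1` keeps the constant positive when `f` is constant
  have hH1 : ∀ x y, |f x - f y| ≤ (H + 1) * |x - y| ^ δ := fun x y =>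
    (hH x y).trans (by gcongr; linarith)
  refine ⟨6 * (H + 1) / (1 - δ), by have := sub_pos.2 hδ1; positivity,
    fun g hg hgc hg0 t ht => ?_⟩
  rw [fracInt_conv_eq_integral_fracInt_mul (by linarith) hδ0 hH hg hgc hg0,
    ← MeasureTheory.integral_const_mul]
  refine (norm_eq_abs _).symm.trans_le (norm_integral_le_of_norm_le
    ((integrable_abs_mul_one_add_log_mul_abs hg hgc ht.1).const_mul _) (ae_of_all _ fun u => ?_))
  rw [norm_mul, norm_eq_abs, norm_eq_abs, ← mul_assoc, ← mul_assoc]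
  gcongr
  simpa only [mul_assoc] using abs_fracInt_shift_sub_le hδ0 hδ1 hH1 ht.1 u

/-- Pointwise bound from the proof of Lemma 7 of the paper: for `δ ∈ (0,1)`, a bounded
`δ`-Hölder `f` and a compactly supported integrable `g` with vanishing mean,
`|I^{1-δ}(f ∗ g)(t)| ≤ C ∫ |u| (1 + log(1 + t/|u|)) |g(u)| du` for `t ∈ [0,1]`. -/
theorem fracInt_conv_pointwise_bound
    (δ : ℝ) (hδ : δ ∈ Set.Ioo (0 : ℝ) 1)
    (f : ℝ → ℝ) (Mf : ℝ) (hfb : ∀ x, |f x| ≤ Mf)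
    (H : ℝ) (hH : ∀ x y, |f x - f y| ≤ H * |x - y| ^ δ) :
    ∃ C > (0 : ℝ), ∀ g : ℝ → ℝ, Integrable g → HasCompactSupport g →
      (∫ u, g u) = 0 →
      ∀ t ∈ Set.Icc (0 : ℝ) 1,
        |fracInt (1 - δ) (conv f g) t|
          ≤ C * ∫ u, |u| * (1 + Real.log (1 + t / |u|)) * |g u| :=
  fracInt_conv_pointwise_bound_general δ hδ f H hH
end
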